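/- arXiv:1801.10352 — 2 statements merged into one kernel-verified Lean document; each statement's English description precedes it below -/
import Mathlib

section
/- The modular entropy equals the Shannon entropy of the escort distribution: for p : Fin N → ℝ with 0 < pᵢ for all i and ∑ᵢ pᵢ = 1, and any t > 0, define the escort distribution qᵢ = pᵢᵗ / (∑ⱼ pⱼᵗ). Then t² · deriv (fun u => −u⁻¹ · log(∑ᵢ pᵢᵘ)) t = ∑ᵢ negMulLog(qᵢ). (Since ((u−1)/u)·S_u(p) = −u⁻¹·log(∑ᵢ pᵢᵘ), this is the identity S̃ₙ = n²·∂ₙ(((n−1)/n)·Sₙ) expressing the modular entropy in terms of the Rényi entropy.) -/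
/-!
Write `Z(u) = ∑ᵢ pᵢᵘ`. Differentiating `-u⁻¹ log Z(u)` gives
`t² ∂ₜ(-t⁻¹ log Z) = log Z(t) - t Z'(t) / Z(t)` with `t Z'(t) = ∑ᵢ pᵢᵗ log pᵢᵗ`.
On the other side, normalising weights `w` by their total `Z` shifts their entropy:
`∑ᵢ negMulLog (wᵢ / Z) = (∑ᵢ negMulLog wᵢ) / Z + log Z`. With `wᵢ = pᵢᵗ` both sides agree.
-/

open Finset Real

lemma sq_mul_deriv_neg_inv_mul_log {f : ℝ → ℝ} {f' t : ℝ} (hf : HasDerivAt f f' t)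
    (hft : f t ≠ 0) (ht : t ≠ 0) :
    t ^ 2 * deriv (fun u => -u⁻¹ * log (f u)) t = log (f t) - t * f' / f t := by
  have hderiv : HasDerivAt (fun u => -u⁻¹ * log (f u))
      (-(-(t ^ 2)⁻¹) * log (f t) + -t⁻¹ * (f' / f t)) t :=
    (hasDerivAt_inv ht).neg.mul (hf.log hft)
  rw [hderiv.deriv]
  field_simp
  ring

lemma negMulLog_rpow {x : ℝ} (hx : 0 < x) (t : ℝ) :
    negMulLog (x ^ t) = -t * (x ^ t * log x) := by
  rw [negMulLog, log_rpow hx]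
  ring

lemma sum_negMulLog_div_sum {ι : Type*} [Fintype ι] (w : ι → ℝ) (hw : ∑ i, w i ≠ 0) :
    ∑ i, negMulLog (w i / ∑ j, w j) = (∑ i, negMulLog (w i)) / ∑ j, w j + log (∑ j, w j) := by
  simp only [div_eq_mul_inv, negMulLog_mul, sum_add_distrib, ← mul_sum, ← sum_mul]
  rw [negMulLog, log_inv]
  field_simp

section PowerSums

variable {ι : Type*} [Fintype ι] {p : ι → ℝ}

lemma hasDerivAt_sum_rpow (hp : ∀ i, 0 < p i) (t : ℝ) :
    HasDerivAt (fun u => ∑ i, p i ^ u) (∑ i, p i ^ t * log (p i)) t :=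
  HasDerivAt.fun_sum fun i _ => (hasStrictDerivAt_const_rpow (hp i) t).hasDerivAt

lemma sum_rpow_pos [Nonempty ι] (hp : ∀ i, 0 < p i) (t : ℝ) : 0 < ∑ i, p i ^ t :=
  sum_pos (fun i _ => rpow_pos_of_pos (hp i) t) univ_nonempty

end PowerSums

theorem modular_entropy_eq_escort_shannon_general {N : ℕ} (p : Fin N → ℝ)
    (hp : ∀ i, 0 < p i)
    (t : ℝ) (ht : 0 < t) :
    t ^ 2 * deriv (fun u : ℝ => -u⁻¹ * Real.log (∑ i, p i ^ u)) t
      = ∑ i, Real.negMulLog (p i ^ t / ∑ j, p j ^ t) := by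
  rcases isEmpty_or_nonempty (Fin N) with hN | hN
  · simp
  have hZ := (sum_rpow_pos hp t).ne'
  rw [sq_mul_deriv_neg_inv_mul_log (hasDerivAt_sum_rpow hp t) hZ ht.ne',
    sum_negMulLog_div_sum _ hZ]
  simp only [negMulLog_rpow (hp _), ← mul_sum]
  ring

/-- The modular entropy `S̃ₙ = n² ∂ₙ(((n−1)/n)·Sₙ)` equals the Shannon entropy of
the escort distribution `qᵢ = pᵢᵗ / ∑ⱼ pⱼᵗ`. -/
theorem modular_entropy_eq_escort_shannon {N : ℕ} (p : Fin N → ℝ)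
    (hp : ∀ i, 0 < p i) (hsum : ∑ i, p i = 1)
    (t : ℝ) (ht : 0 < t) :
    t ^ 2 * deriv (fun u : ℝ => -u⁻¹ * Real.log (∑ i, p i ^ u)) t
      = ∑ i, Real.negMulLog (p i ^ t / ∑ j, p j ^ t) :=
  modular_entropy_eq_escort_shannon_general p hp t ht
end

section
/- Hermite–Gaussian eigenfunctions of the Gaussian (Mehler) kernel: let β, γ be real with 0 ≤ β < γ, set α = √(γ² − β²) and ξ = β/(α + γ). Define the kernel ρ(x,x′) = √((γ−β)/π) · exp(−(γ/2)·(x² + x′²) + β·x·x′) and, for n : ℕ, the function f_n(x) = He_n(√(2α)·x) · exp(−α·x²/2), where He_n is the n-th Hermite polynomial (Mathlib's Polynomial.hermite n, with integer coefficients, evaluated over ℝ). Then for every n : ℕ and every x : ℝ, ∫_{x′ ∈ ℝ} ρ(x,x′)·f_n(x′) dx′ = (1−ξ)·ξⁿ · f_n(x). -/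
/-!
Put `a = (α + γ) / 2` and `c = √(2α)`. Up to a factor depending only on `x`, the integral is the
moment `Iₙ = ∫ Heₙ(c t) w(t) dt` with `w(t) = e^{-a t² + b t}`, `b = β x`. Integration by parts
gives `2a ∫ t P w = ∫ (P' + b P) w` for every polynomial `P`; combined with
`He_{m+2} = X He_{m+1} - (m + 1) Heₘ` it yields `I_{m+2} = ξ c x I_{m+1} - (m + 1) ξ² Iₘ`, because
`1 - c² / (2a) = ξ²` and `c b / (2a) = ξ c x`. This is the recurrence satisfied by
`ξᵐ Heₘ(c x)`, so `Iₙ = ξⁿ Heₙ(c x) I₀`, and the Gaussian integral `I₀` combines with the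
normalisation `√((γ - β) / π)` into `1 - ξ`.
-/

open MeasureTheory Polynomial Real

namespace Polynomial

theorem derivative_hermite_succ (n : ℕ) :
    derivative (hermite (n + 1)) = (n + 1 : ℤ[X]) * hermite n := by
  induction n with
  | zero => simp
  | succ n ih =>
    rw [hermite_succ (n + 1), derivative_sub, derivative_mul, derivative_X, one_mul, ih,
      derivative_mul, hermite_succ n]
    simp only [derivative_add, derivative_natCast, derivative_one, add_zero, zero_mul, zero_add]
    push_cast
    ring

theorem hermite_add_two (n : ℕ) :
    hermite (n + 2) = X * hermite (n + 1) - (n + 1 : ℤ[X]) * hermite n := by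
  rw [hermite_succ (n + 1), derivative_hermite_succ]

end Polynomial

theorem eq_pow_mul_hermite_of_recurrence {R : Type*} [CommRing R] {s : ℕ → R} {ξ y : R}
    (h₁ : s 1 = ξ * y * s 0)
    (h₂ : ∀ m : ℕ, s (m + 2) = ξ * y * s (m + 1) - (m + 1) * ξ ^ 2 * s m) (m : ℕ) :
    s m = ξ ^ m * aeval y (hermite m) * s 0 := by
  induction m using Nat.twoStepInduction with
  | zero => simp
  | one => simp [h₁]
  | more m ih₀ ih₁ =>
    rw [h₂, ih₀, ih₁, hermite_add_two]
    simp only [map_sub, map_mul, aeval_X, map_add, map_natCast, map_one]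
    ring

noncomputable def scaledHermite (c : ℝ) (m : ℕ) : ℝ[X] :=
  ((hermite m).map (algebraMap ℤ ℝ)).comp (C c * X)

theorem eval_scaledHermite (c : ℝ) (m : ℕ) (t : ℝ) :
    (scaledHermite c m).eval t = aeval (c * t) (hermite m) := by
  simp [scaledHermite, eval_comp, aeval_def, eval₂_eq_eval_map]

theorem scaledHermite_zero (c : ℝ) : scaledHermite c 0 = 1 := by
  simp [scaledHermite]

theorem scaledHermite_one (c : ℝ) : scaledHermite c 1 = c • X := by
  simp [scaledHermite, C_mul']

theorem scaledHermite_add_two (c : ℝ) (m : ℕ) :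
    scaledHermite c (m + 2) =
      c • (X * scaledHermite c (m + 1)) - (m + 1 : ℝ) • scaledHermite c m := by
  simp only [scaledHermite, hermite_add_two, Polynomial.map_sub, Polynomial.map_mul, map_X,
    sub_comp, mul_comp, X_comp, Polynomial.map_add, Polynomial.map_natCast, Polynomial.map_one,
    add_comp, natCast_comp, one_comp, smul_eq_C_mul, C_add, C_1, map_natCast]
  ring

theorem derivative_scaledHermite_succ (c : ℝ) (m : ℕ) :
    derivative (scaledHermite c (m + 1)) = ((m + 1) * c) • scaledHermite c m := by
  simp only [scaledHermite, derivative_comp, derivative_map, derivative_hermite_succ,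
    Polynomial.map_mul, Polynomial.map_add, Polynomial.map_natCast, Polynomial.map_one, mul_comp,
    add_comp, natCast_comp, one_comp, derivative_mul, derivative_C, derivative_X, smul_eq_C_mul,
    C_mul, C_add, C_1, map_natCast]
  ring

theorem integrable_eval_mul_exp_neg_mul_sq {a : ℝ} (ha : 0 < a) (P : ℝ[X]) :
    Integrable fun t => P.eval t * exp (-a * t ^ 2) := by
  induction P using Polynomial.induction_on' with
  | add P Q hP hQ => simpa only [eval_add, add_mul] using hP.fun_add hQ
  | monomial k r =>
    simpa only [eval_monomial, Real.rpow_natCast, mul_assoc] using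
      (integrable_rpow_mul_exp_neg_mul_sq ha (neg_one_lt_zero.trans_le k.cast_nonneg)).const_mul r

theorem exp_neg_mul_sq_add_mul {a : ℝ} (ha : a ≠ 0) (b t : ℝ) :
    exp (-a * t ^ 2 + b * t) = exp (b ^ 2 / (4 * a)) * exp (-a * (t - b / (2 * a)) ^ 2) := by
  rw [← exp_add]
  congr 1
  field_simp
  ring

theorem integrable_eval_mul_exp_neg_mul_sq_add_mul {a : ℝ} (ha : 0 < a) (b : ℝ) (P : ℝ[X]) :
    Integrable fun t => P.eval t * exp (-a * t ^ 2 + b * t) := by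
  set μ := b / (2 * a)
  have := ((integrable_eval_mul_exp_neg_mul_sq ha (P.comp (X + C μ))).comp_sub_right μ).const_mul
    (exp (b ^ 2 / (4 * a)))
  refine this.congr (Filter.Eventually.of_forall fun t => ?_)
  simp only [exp_neg_mul_sq_add_mul ha.ne', eval_comp, eval_add, eval_X, eval_C, sub_add_cancel, μ]
  ring

theorem integral_exp_neg_mul_sq_add_mul {a : ℝ} (ha : 0 < a) (b : ℝ) :
    ∫ t, exp (-a * t ^ 2 + b * t) = √(π / a) * exp (b ^ 2 / (4 * a)) := by
  simp_rw [exp_neg_mul_sq_add_mul ha.ne']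
  rw [integral_const_mul, integral_sub_right_eq_self (fun t => exp (-a * t ^ 2)),
    integral_gaussian, mul_comm]

noncomputable def gaussianMoment {a : ℝ} (ha : 0 < a) (b : ℝ) : ℝ[X] →ₗ[ℝ] ℝ where
  toFun P := ∫ t, P.eval t * exp (-a * t ^ 2 + b * t)
  map_add' P Q := by
    simp only [eval_add, add_mul]
    exact integral_add (integrable_eval_mul_exp_neg_mul_sq_add_mul ha b P)
      (integrable_eval_mul_exp_neg_mul_sq_add_mul ha b Q)
  map_smul' r P := by
    simp only [eval_smul, smul_eq_mul, mul_assoc, RingHom.id_apply]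
    exact integral_const_mul r _

theorem gaussianMoment_apply {a : ℝ} (ha : 0 < a) (b : ℝ) (P : ℝ[X]) :
    gaussianMoment ha b P = ∫ t, P.eval t * exp (-a * t ^ 2 + b * t) := rfl

theorem gaussianMoment_X_mul {a : ℝ} (ha : 0 < a) (b : ℝ) (P : ℝ[X]) :
    2 * a * gaussianMoment ha b (X * P) =
      gaussianMoment ha b (derivative P) + b * gaussianMoment ha b P := by
  have hderiv (t : ℝ) : HasDerivAt (fun t => P.eval t * exp (-a * t ^ 2 + b * t))
      ((derivative P + b • P - (2 * a) • (X * P)).eval t * exp (-a * t ^ 2 + b * t)) t := by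
    have hq : HasDerivAt (fun t => -a * t ^ 2 + b * t) (-a * (2 * t) + b) t := by
      simpa using ((hasDerivAt_pow 2 t).const_mul (-a)).fun_add ((hasDerivAt_id t).const_mul b)
    refine ((P.hasDerivAt t).fun_mul hq.exp).congr_deriv ?_
    simp only [eval_add, eval_sub, eval_smul, eval_mul, eval_X, smul_eq_mul]
    ring
  have hzero := integral_eq_zero_of_hasDerivAt_of_integrable hderiv
    (integrable_eval_mul_exp_neg_mul_sq_add_mul ha b _)
    (integrable_eval_mul_exp_neg_mul_sq_add_mul ha b P)
  rw [← gaussianMoment_apply ha, map_sub, map_add, map_smul, map_smul, smul_eq_mul,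
    smul_eq_mul] at hzero
  linarith

theorem integral_hermite_mul_exp_neg_mul_sq_add_mul {a b c ξ y : ℝ} (ha : 0 < a)
    (hξ : 2 * a * ξ ^ 2 = 2 * a - c ^ 2) (hy : 2 * a * ξ * y = c * b) (m : ℕ) :
    ∫ t, aeval (c * t) (hermite m) * exp (-a * t ^ 2 + b * t) =
      ξ ^ m * aeval y (hermite m) * ∫ t, exp (-a * t ^ 2 + b * t) := by
  have h2a : 2 * a ≠ 0 := by positivity
  have key := eq_pow_mul_hermite_of_recurrence
    (s := fun m => gaussianMoment ha b (scaledHermite c m)) (ξ := ξ) (y := y) ?_ ?_ m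
  · simpa only [gaussianMoment_apply, eval_scaledHermite, scaledHermite_zero, eval_one, one_mul]
      using key
  · apply mul_left_cancel₀ h2a
    have hparts := gaussianMoment_X_mul ha b 1
    rw [derivative_one, map_zero, mul_one] at hparts
    rw [scaledHermite_one, scaledHermite_zero, map_smul, smul_eq_mul]
    linear_combination c * hparts - gaussianMoment ha b 1 * hy
  · intro m
    apply mul_left_cancel₀ h2a
    have hparts := gaussianMoment_X_mul ha b (scaledHermite c (m + 1))
    rw [derivative_scaledHermite_succ, map_smul, smul_eq_mul] at hparts
    simp only [scaledHermite_add_two, map_sub, map_smul, smul_eq_mul]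
    linear_combination c * hparts - gaussianMoment ha b (scaledHermite c (m + 1)) * hy
      + (m + 1) * gaussianMoment ha b (scaledHermite c m) * hξ

theorem integral_exp_mehler_mul_hermite {α β γ ξ : ℝ} (hα : 0 ≤ α)
    (hα_sq : α ^ 2 = γ ^ 2 - β ^ 2) (hαγ : 0 < α + γ) (hξ : ξ * (α + γ) = β) (n : ℕ) (x : ℝ) :
    ∫ x', exp (-(γ / 2) * (x ^ 2 + x' ^ 2) + β * x * x') *
        (aeval (√(2 * α) * x') (hermite n) * exp (-α * x' ^ 2 / 2)) =
      √(2 * π / (α + γ)) * ξ ^ n *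
        (aeval (√(2 * α) * x) (hermite n) * exp (-α * x ^ 2 / 2)) := by
  set a := (α + γ) / 2 with ha_def
  have ha : 0 < a := half_pos hαγ
  have hξ_sq : 2 * a * ξ ^ 2 = 2 * a - √(2 * α) ^ 2 := by
    rw [sq_sqrt (by positivity), ha_def]
    apply mul_left_cancel₀ hαγ.ne'
    linear_combination (ξ * (α + γ) + β) * hξ + hα_sq
  have hexp (x' : ℝ) : exp (-(γ / 2) * (x ^ 2 + x' ^ 2) + β * x * x') * exp (-α * x' ^ 2 / 2) =
      exp (-α * x ^ 2 / 2 - (β * x) ^ 2 / (4 * a)) * exp (-a * x' ^ 2 + β * x * x') := by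
    rw [← exp_add, ← exp_add]
    congr 1
    field_simp
    linear_combination (2 * x ^ 2) * hα_sq
  have hintegrand (x' : ℝ) :
      exp (-(γ / 2) * (x ^ 2 + x' ^ 2) + β * x * x') *
          (aeval (√(2 * α) * x') (hermite n) * exp (-α * x' ^ 2 / 2)) =
        exp (-α * x ^ 2 / 2 - (β * x) ^ 2 / (4 * a)) *
          (aeval (√(2 * α) * x') (hermite n) * exp (-a * x' ^ 2 + β * x * x')) := by
    linear_combination aeval (√(2 * α) * x') (hermite n) * hexp x'
  have hy : 2 * a * ξ * (√(2 * α) * x) = √(2 * α) * (β * x) := by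
    rw [ha_def]
    linear_combination √(2 * α) * x * hξ
  simp_rw [hintegrand]
  rw [integral_const_mul, integral_hermite_mul_exp_neg_mul_sq_add_mul ha hξ_sq hy,
    integral_exp_neg_mul_sq_add_mul ha, exp_sub, ha_def]
  field_simp

theorem mehler_normalization {α β γ ξ : ℝ} (hα : 0 ≤ α) (hβγ : β < γ)
    (hα_sq : α ^ 2 = γ ^ 2 - β ^ 2) (hαγ : 0 < α + γ) (hξ : ξ * (α + γ) = β) :
    √((γ - β) / π) * √(2 * π / (α + γ)) = 1 - ξ := by
  have hξ_le : ξ ≤ 1 := le_of_mul_le_mul_right (by linarith) hαγ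
  rw [← sqrt_mul (div_nonneg (by linarith) pi_pos.le), ← sqrt_sq (sub_nonneg.2 hξ_le),
    eq_div_of_mul_eq hαγ.ne' hξ]
  congr 1
  field_simp
  linear_combination -hα_sq

/-- Hermite–Gaussian eigenfunctions of the Gaussian (Mehler) kernel
`ρ(x,x′) = √((γ−β)/π)·exp(−(γ/2)(x²+x′²)+βxx′)`: for `0 ≤ β < γ`,
`α = √(γ²−β²)` and `ξ = β/(α+γ)`, the functions
`fₙ(x) = Heₙ(√(2α)·x)·exp(−αx²/2)` satisfy `∫ ρ(x,x′) fₙ(x′) dx′ = (1−ξ)ξⁿ fₙ(x)`. -/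
theorem mehler_kernel_eigenfunctions
    (β γ : ℝ) (hβ : 0 ≤ β) (hβγ : β < γ)
    (α ξ : ℝ) (hα : α = Real.sqrt (γ ^ 2 - β ^ 2)) (hξ : ξ = β / (α + γ))
    (ρ : ℝ → ℝ → ℝ)
    (hρ : ∀ x x', ρ x x' = Real.sqrt ((γ - β) / Real.pi) *
        Real.exp (-(γ / 2) * (x ^ 2 + x' ^ 2) + β * x * x'))
    (f : ℕ → ℝ → ℝ)
    (hf : ∀ n x, f n x =
        Polynomial.aeval (Real.sqrt (2 * α) * x) (Polynomial.hermite n) *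
          Real.exp (-α * x ^ 2 / 2))
    (n : ℕ) (x : ℝ) :
    (∫ x' : ℝ, ρ x x' * f n x') = (1 - ξ) * ξ ^ n * f n x := by
  have hβγ_sq : 0 < γ ^ 2 - β ^ 2 := by nlinarith
  have hα_sq : α ^ 2 = γ ^ 2 - β ^ 2 := hα ▸ sq_sqrt hβγ_sq.le
  have hα_pos : 0 < α := hα ▸ sqrt_pos.2 hβγ_sq
  have hαγ : 0 < α + γ := by linarith
  have hξβ : ξ * (α + γ) = β := by rw [hξ]; field_simp
  simp_rw [hρ, hf, mul_assoc √((γ - β) / π), integral_const_mul,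
    integral_exp_mehler_mul_hermite hα_pos.le hα_sq hαγ hξβ,
    ← mehler_normalization hα_pos.le hβγ hα_sq hαγ hξβ]
  ring
end
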